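/- arXiv:1303.3554 — 2 statements merged into one kernel-verified Lean document; each statement's English description precedes it below -/
import Mathlib

section
/- Let a > 0, c ≤ -1, Q > 0, M > 0, and u ∈ C²([-a,a]) with 0 ≤ u ≤ M, u(a) = 0, and |u'' + cu'| ≤ Q on [-a,a]. Define K₀ = 2·max_{c ≤ -1} (1/|c|) ln(M c²/Q + 1). Then u'(x) ≥ -2Q/|c| for all x ∈ (-a, a - K₀]. -/
/-!
Suppose `u'(y) < -2Q/|c|` at some `y ∈ (-a, a - K₀]`. Since `u'' ≤ |c| u' + Q`, Grönwall's
inequality keeps `u'(x) ≤ -(Q/|c|) e^{|c|(x-y)}` on `[y, a]`; integrating from `y` to `a` with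
`u(a) = 0` gives `u(y) ≥ (Q/c²)(e^{|c|(a-y)} - 1)`. As `|c|(a - y) ≥ |c| K₀ ≥ 2 log(Mc²/Q + 1)`,
this exceeds `M`, contradicting `u ≤ M`.
-/

open Real Set

theorem log_mul_sq_add_one_le {A t : ℝ} (hA : 0 ≤ A) (ht : 1 ≤ t) :
    log (A * t ^ 2 + 1) ≤ (log (A + 1) + 2) * t := by
  have ht0 : 0 < t := by linarith
  have hlogA : 0 ≤ log (A + 1) := log_nonneg (by linarith)
  have hlogt : log t ≤ t := (log_le_sub_one_of_pos ht0).trans (by linarith)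
  calc log (A * t ^ 2 + 1)
      ≤ log ((A + 1) * t ^ 2) := log_le_log (by positivity) (by nlinarith)
    _ = log (A + 1) + 2 * log t := by
        rw [log_mul (by positivity) (by positivity), log_pow]; push_cast; ring
    _ ≤ (log (A + 1) + 2) * t := by nlinarith

theorem bddAbove_range_inv_abs_mul_log {M Q : ℝ} (hM : 0 ≤ M) (hQ : 0 < Q) :
    BddAbove (range fun d : {d : ℝ // d ≤ -1} => (1 / |d.1|) * log (M * d.1 ^ 2 / Q + 1)) := by
  refine ⟨log (M / Q + 1) + 2, ?_⟩
  rintro _ ⟨⟨d, hd⟩, rfl⟩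
  have hd1 : 1 ≤ |d| := by rw [abs_of_neg (by linarith)]; linarith
  have key := log_mul_sq_add_one_le (div_nonneg hM hQ.le) hd1
  rw [sq_abs, div_mul_eq_mul_div] at key
  dsimp only
  rw [one_div_mul_eq_div, div_le_iff₀ (by linarith)]
  exact key

theorem two_mul_log_le_abs_mul_two_mul_iSup {M Q c : ℝ} (hM : 0 ≤ M) (hQ : 0 < Q) (hc : c ≤ -1) :
    2 * log (M * c ^ 2 / Q + 1) ≤
      |c| * (2 * ⨆ d : {d : ℝ // d ≤ -1}, (1 / |d.1|) * log (M * d.1 ^ 2 / Q + 1)) := by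
  have hk : 0 < |c| := abs_pos.mpr (by linarith)
  have h := le_ciSup (bddAbove_range_inv_abs_mul_log hM hQ) ⟨c, hc⟩
  dsimp only at h
  rw [one_div_mul_eq_div, div_le_iff₀ hk] at h
  linarith

theorem lt_exp_sub_one_of_two_mul_log_le {X t : ℝ} (hX : 0 < X) (ht : 2 * log (X + 1) ≤ t) :
    X < exp t - 1 := by
  have hsq : exp (2 * log (X + 1)) = (X + 1) ^ 2 := by
    rw [mul_comm, exp_mul, exp_log (by linarith)]; norm_cast
  nlinarith [exp_le_exp.mpr ht]

theorem le_neg_mul_exp_of_deriv_le_mul_add {f f' : ℝ → ℝ} {k Q a b : ℝ} (hk : 0 < k)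
    (hQ : 0 ≤ Q) (hf : ContinuousOn f (Icc a b))
    (hf' : ∀ x ∈ Ico a b, HasDerivWithinAt f (f' x) (Ici x) x)
    (ha : f a ≤ -(2 * Q / k)) (bound : ∀ x ∈ Ico a b, f' x ≤ k * f x + Q) :
    ∀ x ∈ Icc a b, f x ≤ -(Q / k) * exp (k * (x - a)) := by
  intro x hx
  have h := le_gronwallBound_of_liminf_deriv_right_le hf
    (fun x hx _ hr => (hf' x hx).liminf_right_slope_le hr) ha bound x hx
  rw [gronwallBound_of_K_ne_0 hk.ne'] at h
  have hQk : 0 ≤ Q / k := div_nonneg hQ hk.le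
  have h2 : 2 * Q / k = 2 * (Q / k) := mul_div_assoc 2 Q k
  nlinarith [exp_pos (k * (x - a))]

theorem le_sub_of_deriv_le_neg_mul_exp {f f' : ℝ → ℝ} {k Q a b : ℝ} (hk : 0 < k) (hab : a ≤ b)
    (hf : ContinuousOn f (Icc a b)) (hf' : ∀ x ∈ Ico a b, HasDerivWithinAt f (f' x) (Ici x) x)
    (bound : ∀ x ∈ Ico a b, f' x ≤ -(Q / k) * exp (k * (x - a))) :
    f b ≤ f a - Q / k ^ 2 * (exp (k * (b - a)) - 1) := by
  have hB : ∀ x, HasDerivAt (fun x => f a - Q / k ^ 2 * (exp (k * (x - a)) - 1))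
      (-(Q / k) * exp (k * (x - a))) x := by
    intro x
    have he : HasDerivAt (fun x => exp (k * (x - a))) (exp (k * (x - a)) * k) x := by
      simpa using (((hasDerivAt_id x).sub_const a).const_mul k).exp
    refine (((he.sub_const 1).const_mul (Q / k ^ 2)).const_sub (f a)).congr_deriv ?_
    field_simp [hk.ne']
  refine image_le_of_deriv_right_le_deriv_boundary hf hf' (by simp)
    (fun x _ => (hB x).continuousAt.continuousWithinAt) (fun x _ => (hB x).hasDerivWithinAt)
    bound (right_mem_Icc.mpr hab)

theorem deriv_lower_bound_general (a c Q M K₀ : ℝ) (hQ : 0 < Q) (hM : 0 < M)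
    (hc : c ≤ -1)
    (hK₀ : K₀ = 2 * ⨆ d : {d : ℝ // d ≤ -1}, (1 / |d.1|) * Real.log (M * d.1 ^ 2 / Q + 1))
    (u : ℝ → ℝ) (hu : ContDiff ℝ 2 u)
    (hrange : ∀ x ∈ Set.Icc (-a) a, 0 ≤ u x ∧ u x ≤ M)
    (hua : u a = 0)
    (hbound : ∀ z ∈ Set.Icc (-a) a, |deriv (deriv u) z + c * deriv u z| ≤ Q) :
    ∀ x ∈ Set.Ioc (-a) (a - K₀), -(2 * Q / |c|) ≤ deriv u x := by
  rintro y ⟨hya, hyK⟩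
  by_contra! hy
  have hc0 : c < 0 := by linarith
  have hck : c = -|c| := by rw [abs_of_neg hc0, neg_neg]
  have hk : 0 < |c| := abs_pos.mpr hc0.ne
  have hMc : 0 < M * c ^ 2 / Q := by rw [← sq_abs]; positivity
  have hgap : 2 * log (M * c ^ 2 / Q + 1) ≤ |c| * (a - y) :=
    (hK₀ ▸ two_mul_log_le_abs_mul_two_mul_iSup hM.le hQ hc).trans (by gcongr; linarith)
  have hy_lt : y ≤ a := by nlinarith [log_pos (by linarith : 1 < M * c ^ 2 / Q + 1)]
  have hderiv := le_neg_mul_exp_of_deriv_le_mul_add hk hQ.le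
    (hu.continuous_deriv (by norm_num)).continuousOn
    (fun x _ => (hu.differentiable_deriv_two x).hasDerivAt.hasDerivWithinAt) hy.le
    (fun x hx => by
      have := (abs_le.mp (hbound x ⟨by linarith [hx.1], hx.2.le⟩)).2
      rw [hck] at this
      linarith)
  have hdrop := le_sub_of_deriv_le_neg_mul_exp hk hy_lt hu.continuous.continuousOn
    (fun x _ => (hu.differentiable (by norm_num) x).hasDerivAt.hasDerivWithinAt)
    (fun x hx => hderiv x (Ico_subset_Icc_self hx))
  have hbig : M < Q / |c| ^ 2 * (exp (|c| * (a - y)) - 1) :=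
    calc M = Q / |c| ^ 2 * (M * c ^ 2 / Q) := by rw [sq_abs]; field_simp [hc0.ne]
      _ < Q / |c| ^ 2 * (exp (|c| * (a - y)) - 1) := by
        gcongr; exact lt_exp_sub_one_of_two_mul_log_le hMc hgap
  linarith [(hrange y ⟨hya.le, hy_lt⟩).2]

theorem deriv_lower_bound (a c Q M K₀ : ℝ) (ha : 0 < a) (hQ : 0 < Q) (hM : 0 < M)
    (hc : c ≤ -1)
    (hK₀ : K₀ = 2 * ⨆ d : {d : ℝ // d ≤ -1}, (1 / |d.1|) * Real.log (M * d.1 ^ 2 / Q + 1))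
    (u : ℝ → ℝ) (hu : ContDiff ℝ 2 u)
    (hrange : ∀ x ∈ Set.Icc (-a) a, 0 ≤ u x ∧ u x ≤ M)
    (hua : u a = 0)
    (hbound : ∀ z ∈ Set.Icc (-a) a, |deriv (deriv u) z + c * deriv u z| ≤ Q) :
    ∀ x ∈ Set.Ioc (-a) (a - K₀), -(2 * Q / |c|) ≤ deriv u x :=
  deriv_lower_bound_general a c Q M K₀ hQ hM hc hK₀ u hu hrange hua hbound
end

section
/- Let M > 1, c ∈ ℝ, a > 0, x_m ∈ (-a, a], and u ∈ C²([-a, x_m]) with 0 ≤ u, u(x_m) = M, u'(x_m) = 0, and -u'' - cu' ≤ 2M² on [-a, x_m]. If c < 0, then u(x) ≥ M(1 - M(x - x_m)²) for all x ∈ [-a, x_m]. -/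
/-!
With `w = u'` the hypothesis reads `w' + c w ≥ -2M²`. Multiplied by the integrating factor
`exp (c y)`, the function `w y - 2M² (xm - y)` becomes nondecreasing on `[x, xm]` (here `c ≤ 0`
is needed) and it vanishes at `xm`, so `u' y ≤ 2M² (xm - y)`. Integrating this once more from
`x` to `xm` gives `M - u x ≤ M² (xm - x)²`.
-/

open Set

theorem nonpos_of_hasDerivAt_of_deriv_add_mul_nonneg {g g' : ℝ → ℝ} {c x b : ℝ} (hxb : x ≤ b)
    (hg : ∀ y ∈ Icc x b, HasDerivAt g (g' y) y) (h : ∀ y ∈ Ioo x b, 0 ≤ g' y + c * g y)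
    (hb : g b ≤ 0) : g x ≤ 0 := by
  let F : ℝ → ℝ := fun y => Real.exp (c * y) * g y
  have hF : ∀ y ∈ Icc x b, HasDerivAt F (Real.exp (c * y) * (g' y + c * g y)) y := fun y hy =>
    ((((hasDerivAt_id y).const_mul c).exp).mul (hg y hy)).congr_deriv (by simp; ring)
  have hmono : MonotoneOn F (Icc x b) := by
    refine monotoneOn_of_hasDerivWithinAt_nonneg
      (f' := fun y => Real.exp (c * y) * (g' y + c * g y)) (convex_Icc x b)
      (fun y hy => (hF y hy).continuousAt.continuousWithinAt) (fun y hy => ?_) (fun y hy => ?_)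
    · exact (hF y (interior_subset hy)).hasDerivWithinAt
    · rw [interior_Icc] at hy
      exact mul_nonneg (Real.exp_pos _).le (h y hy)
  have hFb : F x ≤ F b := hmono (left_mem_Icc.2 hxb) (right_mem_Icc.2 hxb) hxb
  have : Real.exp (c * x) * g x ≤ 0 :=
    hFb.trans (mul_nonpos_of_nonneg_of_nonpos (Real.exp_pos _).le hb)
  exact nonpos_of_mul_nonpos_right this (Real.exp_pos _)

theorem le_mul_sub_of_neg_le_deriv_add_mul {w w' : ℝ → ℝ} {c K x b : ℝ} (hc : c ≤ 0) (hK : 0 ≤ K)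
    (hxb : x ≤ b) (hw : ∀ y ∈ Icc x b, HasDerivAt w (w' y) y)
    (h : ∀ y ∈ Ioo x b, -K ≤ w' y + c * w y) (hb : w b = 0) : w x ≤ K * (b - x) := by
  -- The integrating factor is applied to `w y - K (b - y)`; the extra term `-c K (b - y)` is `≥ 0`.
  have key := nonpos_of_hasDerivAt_of_deriv_add_mul_nonneg (g := fun y => w y - K * (b - y))
    (g' := fun y => w' y + K) (c := c) hxb
    (fun y hy => ((hw y hy).sub (((hasDerivAt_id y).const_sub b).const_mul K)).congr_deriv
      (by simp))
    (fun y hy => by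
      have := h y hy
      nlinarith [mul_nonneg (mul_nonneg (neg_nonneg.2 hc) hK) (sub_nonneg.2 hy.2.le)])
    (by simp [hb])
  linarith

theorem sub_le_half_mul_sq_of_hasDerivAt_le_mul_sub {u u' : ℝ → ℝ} {K x b : ℝ} (hxb : x ≤ b)
    (hu : ∀ y ∈ Icc x b, HasDerivAt u (u' y) y) (h : ∀ y ∈ Ioo x b, u' y ≤ K * (b - y)) :
    u b - u x ≤ K / 2 * (b - x) ^ 2 := by
  let G : ℝ → ℝ := fun y => u y + K / 2 * (b - y) ^ 2
  have hG : ∀ y ∈ Icc x b, HasDerivAt G (u' y - K * (b - y)) y := fun y hy =>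
    ((hu y hy).add ((((hasDerivAt_id y).const_sub b).pow 2).const_mul (K / 2))).congr_deriv
      (by simp; ring)
  have hanti : AntitoneOn G (Icc x b) := by
    refine antitoneOn_of_hasDerivWithinAt_nonpos
      (f' := fun y => u' y - K * (b - y)) (convex_Icc x b)
      (fun y hy => (hG y hy).continuousAt.continuousWithinAt) (fun y hy => ?_) (fun y hy => ?_)
    · exact (hG y (interior_subset hy)).hasDerivWithinAt
    · rw [interior_Icc] at hy
      exact sub_nonpos.2 (h y hy)
  have := hanti (left_mem_Icc.2 hxb) (right_mem_Icc.2 hxb) hxb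
  simp only [G, sub_self] at this
  linarith

theorem lower_parabola_bound_general (M c a xm : ℝ) (hc : c < 0)
    (u : ℝ → ℝ) (hu : ContDiff ℝ 2 u)
    (huxm : u xm = M) (huderiv : deriv u xm = 0)
    (hineq : ∀ x ∈ Set.Icc (-a) xm, -(deriv (deriv u) x) - c * deriv u x ≤ 2 * M ^ 2) :
    ∀ x ∈ Set.Icc (-a) xm, M * (1 - M * (x - xm) ^ 2) ≤ u x := by
  intro x hx
  have hu_diff : Differentiable ℝ u := hu.differentiable (by norm_num)
  have hu'_diff : Differentiable ℝ (deriv u) :=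
    ((contDiff_succ_iff_deriv (n := 1)).1 hu).2.2.differentiable one_ne_zero
  have hsub : Icc x xm ⊆ Icc (-a) xm := Icc_subset_Icc_left hx.1
  have hslope : ∀ y ∈ Ioo x xm, deriv u y ≤ 2 * M ^ 2 * (xm - y) := fun y hy =>
    le_mul_sub_of_neg_le_deriv_add_mul hc.le (by positivity) hy.2.le
      (fun z _ => (hu'_diff z).hasDerivAt)
      (fun z hz => by linarith [hineq z (hsub ⟨hy.1.le.trans hz.1.le, hz.2.le⟩)]) huderiv
  have hdrop := sub_le_half_mul_sq_of_hasDerivAt_le_mul_sub hx.2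
    (fun y _ => (hu_diff y).hasDerivAt) hslope
  rw [huxm] at hdrop
  linear_combination hdrop

theorem lower_parabola_bound (M c a xm : ℝ) (hM : 1 < M) (ha : 0 < a)
    (hxm : xm ∈ Set.Ioc (-a) a) (hc : c < 0)
    (u : ℝ → ℝ) (hu : ContDiff ℝ 2 u)
    (hupos : ∀ x ∈ Set.Icc (-a) xm, 0 ≤ u x)
    (huxm : u xm = M) (huderiv : deriv u xm = 0)
    (hineq : ∀ x ∈ Set.Icc (-a) xm, -(deriv (deriv u) x) - c * deriv u x ≤ 2 * M ^ 2) :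
    ∀ x ∈ Set.Icc (-a) xm, M * (1 - M * (x - xm) ^ 2) ≤ u x :=
  lower_parabola_bound_general M c a xm hc u hu huxm huderiv hineq
end
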